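/- arXiv:2605.26886 — 5 statements merged into one kernel-verified Lean document; each statement's English description precedes it below -/
import Mathlib

section
/- For finite multisets A, B, C of points in a metric space with |A| = |B|, the minimum cost of a perfect matching between A ⊎ C and B ⊎ C equals the minimum cost of a perfect matching between A and B, where the cost of a matching is the sum of distances between matched pairs. -/
/-!
Adding one point `x` to both sides does not change the optimal cost: a matching of `A` with `B`
extends by the pair `(x, x)`, and conversely in a matching of `x ::ₘ A` with `x ::ₘ B` the two
copies of `x` are either matched to each other (drop the pair) or matched as `(x, b)` and
`(a, x)`, which by the triangle inequality may be shortcut to `(a, b)`. Induction on `C` then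
adds its points one at a time.
-/

/-- The minimum cost of a perfect matching between two equal-size multisets
in a metric space: the infimum over all pairings (given by listing the two
multisets and zipping them) of the sum of distances of matched pairs. -/
noncomputable def mdist {V : Type*} [MetricSpace V] (A B : Multiset V) : ℝ :=
  sInf {c : ℝ | ∃ l₁ l₂ : List V, (l₁ : Multiset V) = A ∧ (l₂ : Multiset V) = B ∧
    c = (List.zipWith dist l₁ l₂).sum}

namespace Multiset

section Matchings

variable {V : Type*}

def matchings (A B : Multiset V) : Set (Multiset (V × V)) :=
  {M | M.map Prod.fst = A ∧ M.map Prod.snd = B}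

lemma cons_mem_matchings {A B : Multiset V} {M : Multiset (V × V)} (p : V × V)
    (hM : M ∈ matchings A B) : p ::ₘ M ∈ matchings (p.1 ::ₘ A) (p.2 ::ₘ B) := by
  simp_all [matchings]

lemma coe_zip_mem_matchings {l₁ l₂ : List V} (h : l₁.length = l₂.length) :
    ((l₁.zip l₂ : List (V × V)) : Multiset (V × V)) ∈ matchings (l₁ : Multiset V) l₂ :=
  ⟨by rw [map_coe, List.map_fst_zip h.le], by rw [map_coe, List.map_snd_zip h.ge]⟩

lemma matchings_nonempty {A B : Multiset V} (h : card A = card B) :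
    (matchings A B).Nonempty := by
  rw [← coe_toList A, ← coe_toList B]
  exact ⟨_, coe_zip_mem_matchings (by simpa using h)⟩

end Matchings

variable {V : Type*} [MetricSpace V]

noncomputable def matchingCost (M : Multiset (V × V)) : ℝ :=
  (M.map (Function.uncurry dist)).sum

lemma matchingCost_nonneg (M : Multiset (V × V)) : 0 ≤ matchingCost M :=
  sum_nonneg fun _ hc => by
    obtain ⟨p, -, rfl⟩ := mem_map.1 hc
    exact dist_nonneg

@[simp]
lemma matchingCost_cons (p : V × V) (M : Multiset (V × V)) :
    matchingCost (p ::ₘ M) = dist p.1 p.2 + matchingCost M := by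
  simp [matchingCost, Function.uncurry_def]

lemma bddBelow_matchingCost_image (A B : Multiset V) :
    BddBelow (matchingCost '' matchings A B) :=
  ⟨0, by rintro _ ⟨M, -, rfl⟩; exact matchingCost_nonneg M⟩

/-- If `x` occurs in the pairs `p = (x, b)` and `q = (a, x)` with `p ≠ q`, replace them by
`(a, b)`; this is no more expensive by the triangle inequality through `x`. -/
lemma exists_matchingCost_le_of_mem_matchings_cons {x : V} {A B : Multiset V}
    {M : Multiset (V × V)} (hM : M ∈ matchings (x ::ₘ A) (x ::ₘ B)) :
    ∃ M' ∈ matchings A B, matchingCost M' ≤ matchingCost M := by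
  classical
  obtain ⟨hfst, hsnd⟩ := hM
  obtain ⟨p, hp, hpx⟩ := mem_map.1 (hfst ▸ mem_cons_self x A)
  obtain ⟨q, hq, hqx⟩ := mem_map.1 (hsnd ▸ mem_cons_self x B)
  by_cases hpq : p = q
  · subst hpq
    obtain ⟨R, rfl⟩ : ∃ R, M = p ::ₘ R := ⟨M.erase p, (cons_erase hp).symm⟩
    refine ⟨R, ⟨?_, ?_⟩, by simp⟩
    · simpa [hpx] using hfst
    · simpa [hqx] using hsnd
  · obtain ⟨R, rfl⟩ : ∃ R, M = p ::ₘ q ::ₘ R :=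
      ⟨(M.erase p).erase q, by
        rw [cons_erase ((mem_erase_of_ne (Ne.symm hpq)).2 hq), cons_erase hp]⟩
    refine ⟨(q.1, p.2) ::ₘ R, ⟨?_, ?_⟩, ?_⟩
    · simpa [hpx] using hfst
    · simpa [hqx, cons_swap p.2] using hsnd
    · have hshortcut : dist q.1 p.2 ≤ dist q.1 q.2 + dist p.1 p.2 := by
        rw [hqx, hpx]
        exact dist_triangle q.1 x p.2
      simp only [matchingCost_cons]
      linarith

end Multiset

open Multiset

section

variable {V : Type*} [MetricSpace V]

/-- For lists of equal length, zipping is the same as choosing a multiset of pairs with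
the given marginals. -/
lemma mdist_eq_sInf_matchingCost {A B : Multiset V} (hAB : card A = card B) :
    mdist A B = sInf (matchingCost '' matchings A B) := by
  refine congrArg sInf (Set.ext fun c => ⟨?_, ?_⟩)
  · rintro ⟨l₁, l₂, rfl, rfl, rfl⟩
    refine ⟨l₁.zip l₂, coe_zip_mem_matchings (by simpa using hAB), ?_⟩
    rw [matchingCost, map_coe, List.map_uncurry_zip_eq_zipWith, sum_coe]
  · rintro ⟨M, ⟨rfl, rfl⟩, rfl⟩
    refine ⟨M.toList.map Prod.fst, M.toList.map Prod.snd, ?_, ?_, ?_⟩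
    · rw [← map_coe, coe_toList]
    · rw [← map_coe, coe_toList]
    · rw [List.zipWith_map, List.zipWith_self, matchingCost]
      conv_lhs => rw [← coe_toList M]
      rfl

lemma mdist_cons {A B : Multiset V} (x : V) (hAB : card A = card B) :
    mdist (x ::ₘ A) (x ::ₘ B) = mdist A B := by
  have hxAB : card (x ::ₘ A) = card (x ::ₘ B) := by simp [hAB]
  rw [mdist_eq_sInf_matchingCost hAB, mdist_eq_sInf_matchingCost hxAB]
  apply le_antisymm
  · refine le_csInf ((matchings_nonempty hAB).image _) ?_
    rintro _ ⟨M, hM, rfl⟩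
    refine csInf_le_of_le (bddBelow_matchingCost_image _ _)
      ⟨(x, x) ::ₘ M, cons_mem_matchings (x, x) hM, rfl⟩ ?_
    simp
  · refine le_csInf ((matchings_nonempty hxAB).image _) ?_
    rintro _ ⟨M, hM, rfl⟩
    obtain ⟨M', hM', hle⟩ := exists_matchingCost_le_of_mem_matchings_cons hM
    exact csInf_le_of_le (bddBelow_matchingCost_image _ _) ⟨M', hM', rfl⟩ hle

end

theorem stmt0 {V : Type*} [MetricSpace V] (A B C : Multiset V)
    (hAB : Multiset.card A = Multiset.card B) :
    mdist (A + C) (B + C) = mdist A B := by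
  induction C using Multiset.induction_on with
  | empty => simp
  | cons x C ih => rw [add_cons, add_cons, mdist_cons x (by simp [hAB]), ih]
end

section
/- Let (V, d) be a metric space and let P̂, R̂ be finite multisets of V, and let S be a finite set of points with P̂ ⊆ S. Let Ô ⊆ S \ P̂ minimize dist(Ô, R̂) over all subsets of S \ P̂ of size |R̂|. Then for any multiset T ⊆ S of size |Ô ∪ P̂|, we have dist(Ô ∪ P̂, R̂ ∪ P̂) ≤ dist(T, R̂ ∪ P̂). -/
lemma Multiset.exists_cons_of_map_eq_cons {α β : Type*} {f : α → β} {s : Multiset α} {b : β}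
    {t : Multiset β} (h : s.map f = b ::ₘ t) : ∃ a u, s = a ::ₘ u ∧ f a = b ∧ u.map f = t := by
  classical
  obtain ⟨a, ha, hfa, hu⟩ := (Multiset.map_eq_cons f s t b).mpr h
  exact ⟨a, s.erase a, (Multiset.cons_erase ha).symm, hfa, hu⟩

lemma Multiset.exists_le_map_eq_of_map_eq_add {α β : Type*} {f : α → β} {s : Multiset α}
    {t u : Multiset β} (h : s.map f = t + u) : ∃ s' ≤ s, s'.map f = t := by
  induction u using Multiset.induction generalizing s with
  | empty => exact ⟨s, le_rfl, by simpa using h⟩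
  | cons b u ih =>
    rw [Multiset.add_cons] at h
    obtain ⟨a, s₀, rfl, -, h₀⟩ := exists_cons_of_map_eq_cons h
    obtain ⟨s', hs', hs'f⟩ := ih h₀
    exact ⟨s', hs'.trans (Multiset.le_cons_self _ _), hs'f⟩

section

variable {V : Type*} [MetricSpace V]

/-- A matching is encoded as the multiset of its matched pairs; its two projections are the
multisets being matched. -/
noncomputable def matchingCost (M : Multiset (V × V)) : ℝ := (M.map (Function.uncurry dist)).sum

lemma matchingCost_cons (p : V × V) (M : Multiset (V × V)) :
    matchingCost (p ::ₘ M) = dist p.1 p.2 + matchingCost M := by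
  simp [matchingCost, Function.uncurry]

lemma matchingCost_add (M N : Multiset (V × V)) :
    matchingCost (M + N) = matchingCost M + matchingCost N := by
  simp [matchingCost]

lemma matchingCost_nonneg (M : Multiset (V × V)) : 0 ≤ matchingCost M :=
  Multiset.sum_nonneg fun _ hx => by
    obtain ⟨p, -, rfl⟩ := Multiset.mem_map.mp hx
    exact dist_nonneg

lemma matchingCost_mono {M N : Multiset (V × V)} (h : M ≤ N) : matchingCost M ≤ matchingCost N := by
  obtain ⟨K, rfl⟩ := le_iff_exists_add.mp h
  simpa [matchingCost_add] using matchingCost_nonneg K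

lemma matchingCost_map_diag (Q : Multiset V) : matchingCost (Q.map fun x => (x, x)) = 0 := by
  simp [matchingCost, Function.comp_def]

lemma sum_zipWith_dist (l₁ l₂ : List V) :
    (List.zipWith dist l₁ l₂).sum = matchingCost (l₁.zip l₂ : Multiset (V × V)) := by
  simp [matchingCost, List.map_zip_eq_zipWith]

lemma mdist_le_matchingCost {A B : Multiset V} (M : Multiset (V × V))
    (hA : M.map Prod.fst = A) (hB : M.map Prod.snd = B) : mdist A B ≤ matchingCost M := by
  refine csInf_le ⟨0, ?_⟩ ⟨M.toList.map Prod.fst, M.toList.map Prod.snd, ?_, ?_, ?_⟩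
  · rintro _ ⟨l₁, l₂, -, -, rfl⟩
    rw [sum_zipWith_dist]
    exact matchingCost_nonneg _
  · rw [← Multiset.map_coe, Multiset.coe_toList, hA]
  · rw [← Multiset.map_coe, Multiset.coe_toList, hB]
  · rw [sum_zipWith_dist, List.zip_map']
    simp

lemma le_mdist_of_forall_le_matchingCost {A B : Multiset V} {x : ℝ}
    (hcard : Multiset.card A = Multiset.card B)
    (h : ∀ M : Multiset (V × V), M.map Prod.fst = A → M.map Prod.snd = B → x ≤ matchingCost M) :
    x ≤ mdist A B := by
  refine le_csInf ⟨_, A.toList, B.toList, by simp, by simp, rfl⟩ ?_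
  rintro _ ⟨l₁, l₂, rfl, rfl, rfl⟩
  have hlen : l₁.length = l₂.length := by simpa using hcard
  rw [sum_zipWith_dist]
  exact h _ (by simp [List.map_fst_zip hlen.le]) (by simp [List.map_snd_zip hlen.ge])

lemma mdist_add_add_le {A B : Multiset V} (hcard : Multiset.card A = Multiset.card B)
    (Q : Multiset V) : mdist (A + Q) (B + Q) ≤ mdist A B :=
  le_mdist_of_forall_le_matchingCost hcard fun M hA hB =>
    calc mdist (A + Q) (B + Q) ≤ matchingCost (M + Q.map fun x => (x, x)) :=
          mdist_le_matchingCost _ (by simp [hA]) (by simp [hB])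
      _ = matchingCost M := by rw [matchingCost_add, matchingCost_map_diag, add_zero]

lemma exists_matchingCost_le_of_cons_cons {c : V} {A B : Multiset V} {M : Multiset (V × V)}
    (hA : M.map Prod.fst = c ::ₘ A) (hB : M.map Prod.snd = c ::ₘ B) :
    ∃ M', M'.map Prod.fst = A ∧ M'.map Prod.snd = B ∧ matchingCost M' ≤ matchingCost M := by
  obtain ⟨p, N, rfl, hp, hNA⟩ := Multiset.exists_cons_of_map_eq_cons hA
  rw [Multiset.map_cons, Multiset.cons_eq_cons] at hB
  rcases hB with ⟨hpc, hNB⟩ | ⟨-, B', hNB, rfl⟩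
  · refine ⟨N, hNA, hNB, ?_⟩
    simp [matchingCost_cons, hp, hpc]
  · -- `p = (c, y)` and `q = (x, c)` are replaced by `(x, y)`
    obtain ⟨q, N₀, rfl, hq, hN₀⟩ := Multiset.exists_cons_of_map_eq_cons hNB
    refine ⟨(q.1, p.2) ::ₘ N₀, by simpa using hNA, by simp [hN₀], ?_⟩
    simp only [matchingCost_cons, hp, hq]
    linarith [dist_triangle q.1 c p.2]

lemma exists_matchingCost_le_of_add_add (C : Multiset V) {A B : Multiset V} {M : Multiset (V × V)}
    (hA : M.map Prod.fst = A + C) (hB : M.map Prod.snd = B + C) :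
    ∃ M', M'.map Prod.fst = A ∧ M'.map Prod.snd = B ∧ matchingCost M' ≤ matchingCost M := by
  induction C using Multiset.induction generalizing M with
  | empty => exact ⟨M, by simpa using hA, by simpa using hB, le_rfl⟩
  | cons c C ih =>
    rw [Multiset.add_cons] at hA hB
    obtain ⟨M₁, hA₁, hB₁, h₁⟩ := exists_matchingCost_le_of_cons_cons hA hB
    obtain ⟨M', hA', hB', h'⟩ := ih hA₁ hB₁
    exact ⟨M', hA', hB', h'.trans h₁⟩

lemma exists_matchingCost_le_of_map_snd_eq_add [DecidableEq V] {A B Q : Multiset V}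
    {M : Multiset (V × V)} (hA : M.map Prod.fst = A) (hB : M.map Prod.snd = B + Q) :
    ∃ M', M'.map Prod.fst ≤ A - Q ∧ M'.map Prod.snd = B ∧ matchingCost M' ≤ matchingCost M := by
  have hA' : M.map Prod.fst = (A - Q) + A ∩ Q := by rw [hA, Multiset.sub_add_inter]
  have hB' : M.map Prod.snd = (B + (Q - A)) + A ∩ Q := by
    rw [hB, Multiset.inter_comm, add_assoc, Multiset.sub_add_inter]
  obtain ⟨M₁, hA₁, hB₁, h₁⟩ := exists_matchingCost_le_of_add_add _ hA' hB'
  obtain ⟨M', hM', hB'⟩ := Multiset.exists_le_map_eq_of_map_eq_add hB₁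
  exact ⟨M', hA₁ ▸ Multiset.map_le_map hM', hB', (matchingCost_mono hM').trans h₁⟩

end

theorem stmt2_general {V : Type*} [MetricSpace V] [DecidableEq V] (S P O : Finset V) (R : Multiset V)
    (hOcard : O.card = Multiset.card R)
    (hmin : ∀ O' : Finset V, O' ⊆ S \ P → O'.card = Multiset.card R →
      mdist O.val R ≤ mdist O'.val R) :
    ∀ T : Finset V, T ⊆ S → T.card = O.card + P.card →
      mdist (O.val + P.val) (R + P.val) ≤ mdist T.val (R + P.val) := by
  intro T hTS hTcard
  have hcard : Multiset.card T.val = Multiset.card (R + P.val) := by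
    simp [hTcard, hOcard, add_comm]
  calc mdist (O.val + P.val) (R + P.val) ≤ mdist O.val R := mdist_add_add_le hOcard P.val
    _ ≤ mdist T.val (R + P.val) := le_mdist_of_forall_le_matchingCost hcard fun M hT hRP => by
      obtain ⟨M', hM'T, hM'R, hM'⟩ := exists_matchingCost_le_of_map_snd_eq_add hT hRP
      rw [← Finset.sdiff_val] at hM'T
      let O' : Finset V := ⟨M'.map Prod.fst, Multiset.nodup_of_le hM'T (T \ P).nodup⟩
      have hO'T : O' ⊆ T \ P := fun _ ha => Multiset.subset_of_le hM'T ha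
      have hO'S : O' ⊆ S \ P := hO'T.trans (Finset.sdiff_subset_sdiff hTS subset_rfl)
      have hO'card : O'.card = Multiset.card R := by simp [O', ← hM'R]
      calc mdist O.val R ≤ mdist O'.val R := hmin O' hO'S hO'card
        _ ≤ matchingCost M' := mdist_le_matchingCost M' rfl hM'R
        _ ≤ matchingCost M := hM'

/-- If `Ô ⊆ S \ P̂` minimizes the matching distance to the request multiset `R̂`
among all subsets of `S \ P̂` of size `|R̂|`, then for any `T ⊆ S` of size
`|Ô ∪ P̂|`, `dist(Ô ∪ P̂, R̂ ∪ P̂) ≤ dist(T, R̂ ∪ P̂)`. -/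
theorem stmt2 {V : Type*} [MetricSpace V] [DecidableEq V] (S P O : Finset V) (R : Multiset V)
    (hPS : P ⊆ S) (hO : O ⊆ S \ P) (hOcard : O.card = Multiset.card R)
    (hmin : ∀ O' : Finset V, O' ⊆ S \ P → O'.card = Multiset.card R →
      mdist O.val R ≤ mdist O'.val R) :
    ∀ T : Finset V, T ⊆ S → T.card = O.card + P.card →
      mdist (O.val + P.val) (R + P.val) ≤ mdist T.val (R + P.val) :=
  stmt2_general S P O R hOcard hmin
end

section
/- Consider a star metric with center c and n leaves each at distance 1 from c, with one server on each leaf. Requests arrive online: the first request is at the center, and for t = 2, …, n, the t-th request is placed uniformly at random at a leaf that has not yet received a request. Then any online matching algorithm incurs expected total cost at least 2H_n − 1, where H_n is the n-th harmonic number, while the minimum-cost perfect matching with hindsight has cost 1. -/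
/-- Points of the star metric with `n` leaves: `none` is the center, `some i`
is the `i`-th leaf.  Distance 1 between the center and any leaf, distance 2
between distinct leaves. -/
noncomputable def starDist {n : ℕ} (x y : Option (Fin n)) : ℝ :=
  if x = y then 0 else if x = none ∨ y = none then 1 else 2

/-- The adversarial random request sequence determined by a permutation `σ` of the
leaves: the first request (round `0`) is at the center, and the `t`-th request
(for `t ≥ 1`) is at leaf `σ (t - 1)`; a uniformly random `σ` places each
subsequent request uniformly at a leaf that has not yet received a request. -/
def starReq {n : ℕ} (σ : Equiv.Perm (Fin n)) (t : Fin n) : Option (Fin n) :=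
  if t.val = 0 then none
  else some (σ ⟨t.val - 1, Nat.lt_of_le_of_lt (Nat.pred_le _) t.isLt⟩)

lemma starReq_take_congr {n m : ℕ} {σ σ' : Equiv.Perm (Fin n)}
    (h : ∀ j : Fin n, (j : ℕ) < m → σ j = σ' j) :
    (List.ofFn (starReq σ)).take (m + 1) = (List.ofFn (starReq σ')).take (m + 1) := by
  apply List.ext_getElem
  · simp
  · intro i h1 h2
    have hin : i < n := by simp at h1; omega
    have him : i < m + 1 := by simp at h1; omega
    rw [List.getElem_take, List.getElem_take, List.getElem_ofFn, List.getElem_ofFn]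
    unfold starReq
    by_cases h0 : i = 0
    · simp [h0]
    · have : (⟨i, hin⟩ : Fin n).val ≠ 0 := h0
      simp only [this, if_neg this]
      exact congrArg some (h ⟨i - 1, by omega⟩ (by show i - 1 < m; omega))

lemma good_card_mul {n : ℕ} (A : List (Option (Fin n)) → Fin n)
    (hinj : ∀ σ : Equiv.Perm (Fin n),
      Function.Injective fun t : Fin n => A ((List.ofFn (starReq σ)).take (t.val + 1)))
    (k : ℕ) (hk1 : 1 ≤ k) (hkn : k < n) :
    Nat.factorial n ≤ (n - (k - 1)) *
      (Finset.univ.filter (fun σ : Equiv.Perm (Fin n) =>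
        A ((List.ofFn (starReq σ)).take (k + 1)) ≠ σ ⟨k - 1, by omega⟩)).card := by
  classical
  set p : Fin n := ⟨k - 1, by omega⟩ with hp
  set At : Equiv.Perm (Fin n) → ℕ → Fin n :=
    fun σ m => A ((List.ofFn (starReq σ)).take (m + 1)) with hAt
  have hcong : ∀ (σ σ' : Equiv.Perm (Fin n)) (m : ℕ),
      (∀ j : Fin n, (j : ℕ) < m → σ j = σ' j) → At σ m = At σ' m := by
    intro σ σ' m h
    simp only [hAt]
    rw [starReq_take_congr h]
  have hAtinj : ∀ (σ : Equiv.Perm (Fin n)) (a b : ℕ) (ha : a < n) (hb : b < n),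
      At σ a = At σ b → a = b := by
    intro σ a b ha hb hab
    have := hinj σ (a₁ := ⟨a, ha⟩) (a₂ := ⟨b, hb⟩) hab
    exact congrArg Fin.val this
  -- pigeonhole
  have hex : ∀ σ : Equiv.Perm (Fin n), ∃ i : Fin n, (k - 1 ≤ (i : ℕ)) ∧
      ∃ j : ℕ, j < k ∧ At σ j = σ i := by
    intro σ
    by_contra hcon
    push_neg at hcon
    have hmap : ∀ j ∈ Finset.range k, ((σ.symm (At σ j)) : ℕ) ∈ Finset.range (k - 1) := by
      intro j hj
      simp only [Finset.mem_range] at hj ⊢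
      by_contra h'
      exact hcon (σ.symm (At σ j)) (by omega) j hj (by simp)
    have hinj' : Set.InjOn (fun j => ((σ.symm (At σ j)) : ℕ)) (Finset.range k) := by
      intro a ha b hb hab
      simp only [Finset.coe_range, Set.mem_Iio] at ha hb
      have h1 : σ.symm (At σ a) = σ.symm (At σ b) := Fin.ext hab
      exact hAtinj σ a b (by omega) (by omega) (σ.symm.injective h1)
    have := Finset.card_le_card_of_injOn _ hmap hinj'
    simp only [Finset.card_range] at this
    omega
  choose i hi j hjk hij using hex
  set G : Equiv.Perm (Fin n) → Equiv.Perm (Fin n) :=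
    fun σ => σ * Equiv.swap p (i σ) with hG
  set Good : Finset (Equiv.Perm (Fin n)) :=
    Finset.univ.filter (fun σ : Equiv.Perm (Fin n) =>
      A ((List.ofFn (starReq σ)).take (k + 1)) ≠ σ ⟨k - 1, by omega⟩) with hGoodDef
  have hGp : ∀ σ, (G σ) p = σ (i σ) := by
    intro σ
    simp [hG, Equiv.Perm.mul_apply, Equiv.swap_apply_left]
  have hGlow : ∀ (σ : Equiv.Perm (Fin n)) (x : Fin n), (x : ℕ) < k - 1 → (G σ) x = σ x := by
    intro σ x hx
    have h1 : x ≠ p := by intro h; rw [h] at hx; simp [hp] at hx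
    have h2 : x ≠ i σ := by
      intro h; rw [h] at hx; have := hi σ; omega
    simp [hG, Equiv.Perm.mul_apply, Equiv.swap_apply_of_ne_of_ne h1 h2]
  have hGood : ∀ σ, G σ ∈ Good := by
    intro σ
    simp only [hGoodDef, Finset.mem_filter, Finset.mem_univ, true_and]
    show At (G σ) k ≠ (G σ) p
    have h1 : At (G σ) (j σ) = At σ (j σ) := by
      apply hcong
      intro x hx
      exact hGlow σ x (by have := hjk σ; omega)
    have h2 : At (G σ) k ≠ At (G σ) (j σ) := by
      intro h
      have := hAtinj (G σ) k (j σ) hkn (by have := hjk σ; omega) h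
      have := hjk σ; omega
    rw [hGp, ← hij σ, ← h1]
    exact h2
  have hcard := Finset.card_eq_sum_card_fiberwise (f := G)
    (s := (Finset.univ : Finset (Equiv.Perm (Fin n)))) (t := Good) (fun σ _ => hGood σ)
  have hfib : ∀ τ ∈ Good, (Finset.univ.filter fun σ => G σ = τ).card ≤ n - (k - 1) := by
    intro τ _
    have h1 : ∀ σ ∈ Finset.univ.filter fun σ => G σ = τ,
        ((i σ : Fin n) : ℕ) ∈ Finset.Ico (k - 1) n := by
      intro σ _
      simp only [Finset.mem_Ico]
      exact ⟨hi σ, (i σ).isLt⟩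
    have h2 : Set.InjOn (fun σ => ((i σ : Fin n) : ℕ))
        ↑(Finset.univ.filter fun σ => G σ = τ) := by
      intro a ha b hb hab
      simp only [Finset.coe_filter, Set.mem_setOf_eq] at ha hb
      have hiab : i a = i b := Fin.ext hab
      have ha' : a = τ * Equiv.swap p (i a) := by
        rw [← ha.2]; simp [hG, mul_assoc]
      have hb' : b = τ * Equiv.swap p (i b) := by
        rw [← hb.2]; simp [hG, mul_assoc]
      rw [ha', hb', hiab]
    have := Finset.card_le_card_of_injOn _ h1 h2
    simpa using this
  calc Nat.factorial n = (Finset.univ : Finset (Equiv.Perm (Fin n))).card := by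
        rw [Finset.card_univ, Fintype.card_perm, Fintype.card_fin]
    _ = ∑ τ ∈ Good, (Finset.univ.filter fun σ => G σ = τ).card := hcard
    _ ≤ ∑ τ ∈ Good, (n - (k - 1)) := Finset.sum_le_sum hfib
    _ = Good.card * (n - (k - 1)) := by rw [Finset.sum_const, smul_eq_mul]
    _ = (n - (k - 1)) * Good.card := Nat.mul_comm _ _

/-- Any online matching algorithm `A` (choosing, in each round, an unmatched
server given the requests so far) incurs expected cost at least `2·H_n − 1`
on the star metric with one server per leaf, where the expectation is the
uniform average over all permutations `σ`, while for every realization the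
optimal perfect matching with hindsight has cost `1`. -/
theorem stmt5 (n : ℕ) (hn : 1 ≤ n)
    (A : List (Option (Fin n)) → Fin n)
    (hinj : ∀ σ : Equiv.Perm (Fin n),
      Function.Injective fun t : Fin n => A ((List.ofFn (starReq σ)).take (t.val + 1))) :
    2 * (∑ j ∈ Finset.range n, (1 : ℝ) / (j + 1)) - 1 ≤
      (∑ σ : Equiv.Perm (Fin n), ∑ t : Fin n,
          starDist (starReq σ t) (some (A ((List.ofFn (starReq σ)).take (t.val + 1)))))
        / (Nat.factorial n : ℝ) ∧
    ∀ σ : Equiv.Perm (Fin n), ∃ π : Fin n ≃ Fin n,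
      ∑ t : Fin n, starDist (starReq σ t) (some (π t)) = 1 := by
  classical
  obtain ⟨m, rfl⟩ : ∃ m, n = m + 1 := ⟨n - 1, by omega⟩
  set N : ℝ := ((Nat.factorial (m + 1) : ℕ) : ℝ) with hN
  have hNpos : (0:ℝ) < N := by
    rw [hN]; exact_mod_cast Nat.factorial_pos (m + 1)
  constructor
  · rw [le_div_iff₀ hNpos, Finset.sum_comm]
    set f : ℕ → ℝ := fun k => if k = 0 then N else 2 * N / ((m + 1 - (k - 1) : ℕ) : ℝ)
      with hf
    have key : ∀ t : Fin (m + 1), f (t : ℕ) ≤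
        ∑ σ : Equiv.Perm (Fin (m + 1)), starDist (starReq σ t)
          (some (A ((List.ofFn (starReq σ)).take ((t : ℕ) + 1)))) := by
      intro t
      by_cases h0 : (t : ℕ) = 0
      · have hterm : ∀ σ : Equiv.Perm (Fin (m + 1)),
            starDist (starReq σ t)
              (some (A ((List.ofFn (starReq σ)).take ((t : ℕ) + 1)))) = 1 := by
          intro σ
          unfold starReq starDist
          rw [if_pos h0]
          simp
        rw [Finset.sum_congr rfl fun σ _ => hterm σ, Finset.sum_const, nsmul_eq_mul]
        rw [hf]
        simp only [h0, if_pos]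
        rw [Finset.card_univ, Fintype.card_perm, Fintype.card_fin, hN, mul_one]
      · set k := (t : ℕ) with hk
        have hk1 : 1 ≤ k := by omega
        have hkn : k < m + 1 := t.isLt
        have hterm : ∀ σ : Equiv.Perm (Fin (m + 1)),
            starDist (starReq σ t) (some (A ((List.ofFn (starReq σ)).take (k + 1)))) =
            if A ((List.ofFn (starReq σ)).take (k + 1)) ≠ σ ⟨k - 1, by omega⟩
              then (2:ℝ) else 0 := by
          intro σ
          have hreq : starReq σ t = some (σ ⟨k - 1, by omega⟩) := by
            unfold starReq
            rw [if_neg h0]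
          rw [hreq]
          unfold starDist
          rcases eq_or_ne (A ((List.ofFn (starReq σ)).take (k + 1)))
              (σ ⟨k - 1, by omega⟩) with h | h
          · rw [h]; simp
          · rw [if_neg (by simpa using Ne.symm h), if_neg (by simp), if_pos h]
        rw [Finset.sum_congr rfl fun σ _ => hterm σ]
        rw [← Finset.sum_filter, Finset.sum_const, nsmul_eq_mul]
        simp only [hf, h0, if_false]
        have hc := good_card_mul A hinj k hk1 hkn
        have hc' : N ≤ ((m + 1 - (k - 1) : ℕ) : ℝ) *
            ((Finset.univ.filter (fun σ : Equiv.Perm (Fin (m + 1)) =>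
              A ((List.ofFn (starReq σ)).take (k + 1)) ≠ σ ⟨k - 1, by omega⟩)).card : ℝ) := by
          rw [hN]
          exact_mod_cast hc
        have hd : (0:ℝ) < ((m + 1 - (k - 1) : ℕ) : ℝ) := by
          have : 0 < m + 1 - (k - 1) := by omega
          exact_mod_cast this
        rw [div_le_iff₀ hd]
        nlinarith [hc']
    have hsum : (2 * (∑ j ∈ Finset.range (m + 1), (1:ℝ) / (j + 1)) - 1) * N =
        ∑ t : Fin (m + 1), f (t : ℕ) := by
      rw [Fin.sum_univ_eq_sum_range f (m + 1)]
      rw [Finset.sum_range_succ' f m, Finset.sum_range_succ' (fun j => (1:ℝ) / (j + 1)) m]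
      have e0 : f 0 = N := by simp [hf]
      have e1 : ∀ j ∈ Finset.range m, f (j + 1) = 2 * N / ((m + 1 - j : ℕ) : ℝ) := by
        intro j _
        simp [hf]
      rw [Finset.sum_congr rfl e1, e0]
      rw [← Finset.sum_range_reflect (fun j => 2 * N / ((m + 1 - j : ℕ) : ℝ)) m]
      have e2 : ∀ j ∈ Finset.range m,
          2 * N / ((m + 1 - (m - 1 - j) : ℕ) : ℝ) = (1 / ((j:ℝ) + 1 + 1)) * (2 * N) := by
        intro j hj
        simp only [Finset.mem_range] at hj
        have : m + 1 - (m - 1 - j) = j + 2 := by omega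
        rw [this]
        push_cast
        ring
      rw [Finset.sum_congr rfl e2, ← Finset.sum_mul]
      push_cast
      ring
    calc (2 * (∑ j ∈ Finset.range (m + 1), (1:ℝ) / (j + 1)) - 1) * N
        = ∑ t : Fin (m + 1), f (t : ℕ) := hsum
      _ ≤ _ := Finset.sum_le_sum fun t _ => key t
  · intro σ
    refine ⟨(Equiv.subRight (1 : Fin (m + 1))).trans σ, ?_⟩
    have hterm : ∀ t : Fin (m + 1),
        starDist (starReq σ t) (some (((Equiv.subRight (1 : Fin (m + 1))).trans σ) t)) =
        if t = 0 then 1 else 0 := by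
      intro t
      by_cases h0 : t = 0
      · subst h0
        unfold starReq starDist
        simp
      · have hv : (t : ℕ) ≠ 0 := fun h => h0 (Fin.ext h)
        have h1 : ((Equiv.subRight (1 : Fin (m + 1))).trans σ) t = σ (t - 1) := by
          simp [Equiv.subRight_apply]
        have h2 : starReq σ t = some (σ (t - 1)) := by
          unfold starReq
          rw [if_neg hv]
          congr 1
          apply congrArg
          apply Fin.ext
          rw [Fin.coe_sub_one, if_neg h0]
        rw [h1, h2]
        unfold starDist
        simp [h0]
    rw [Finset.sum_congr rfl fun t _ => hterm t]
    simp
end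

section
/- Consider a star metric with n leaves at distance 1 from the center, one server per leaf, and a deterministic online matching algorithm that may query a prediction oracle at most B times. There exists an adversarial request sequence and accurate predictions such that the algorithm's cost is at least 2n − B − 1, while the optimal offline perfect matching has cost at most B + 1; hence the competitive ratio is at least 2n/(B+1) − 1. -/
/-- The list of requests revealed up to and including round `t` (0-indexed). -/
def reqsUpTo {n : ℕ} (r : Fin n → Option (Fin n)) (t : ℕ) : List (Option (Fin n)) :=
  (List.ofFn r).take (t + 1)

/-- The list of predictions received up to and including round `t`, where
`q` decides, from the requests seen so far, whether to query the oracle,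
and `P t'` is the prediction returned in round `t'`. -/
def predsUpTo {n : ℕ} (q : List (Option (Fin n)) → Bool) (r : Fin n → Option (Fin n))
    (P : ℕ → Finset (Fin n)) (t : ℕ) : List (Finset (Fin n)) :=
  ((List.range (t + 1)).filter fun t' => q (reqsUpTo r t')).map P

/-- The accurate prediction after round `t`: the set of servers matched to the
requests of rounds `0, …, t` in the fixed offline matching `π`. -/
def accPred {n : ℕ} (π : Fin n ≃ Fin n) (t : ℕ) : Finset (Fin n) :=
  Finset.image π (Finset.univ.filter fun i : Fin n => i.val ≤ t)

/-!
The adversary simulates the deterministic algorithm and builds the offline matching lazily.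
It requests a leaf whose server the algorithm has already used but whose offline partner is not
yet committed: the offline matching serves it at cost 0, while the algorithm, never reusing a
server, pays 2. If there is no such server it requests the center and leaves that round's offline
partner open until the algorithm next queries, since only a prediction forces the adversary to
reveal the matching of earlier rounds. While some round is open, fewer servers are committed than
the algorithm has used, so a leaf request is available; hence at most one center request is issued
before the first query and between consecutive queries, at most `B + 1` in all. The offline
matching pays 1 per center request, the algorithm `2n` minus the number of center requests.
-/

open Finset

namespace OnlineStarMatching

section PartialMatching

variable {α β : Type*}

theorem exists_perm_extend_of_injOn [Finite α] {σ : α → Option α}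
    (hσ : Set.InjOn σ {i | σ i ≠ none}) :
    ∃ τ : Equiv.Perm α, ∀ i v, σ i = some v → τ i = v := by
  let D := {i // σ i ≠ none}
  let f : D → α := fun i => (σ i).get (Option.isSome_iff_ne_none.2 i.2)
  have hf : Function.Injective f := fun i j hij =>
    Subtype.ext (hσ i.2 j.2 (by simpa [f] using congrArg some hij))
  obtain ⟨τ, hτ⟩ := Equiv.Perm.exists_extending_pair (fun i : D => (i : α)) f
    Subtype.val_injective hf
  refine ⟨τ, fun i v hi => ?_⟩
  have := hτ ⟨i, by simp [hi]⟩
  simpa [f, hi] using this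

open scoped Classical in
noncomputable def completion [Finite α] (σ : α → Option α) : Equiv.Perm α :=
  if h : Set.InjOn σ {i | σ i ≠ none} then (exists_perm_extend_of_injOn h).choose else 1

theorem completion_apply [Finite α] {σ : α → Option α}
    (hσ : Set.InjOn σ {i | σ i ≠ none}) {i v : α} (hi : σ i = some v) :
    completion σ i = v := by
  rw [completion, dif_pos hσ]
  exact (exists_perm_extend_of_injOn hσ).choose_spec i v hi

theorem injOn_of_eq_some {σ : α → Option β} {τ : α → β} (hτ : Function.Injective τ)
    (h : ∀ i v, σ i = some v → τ i = v) : Set.InjOn σ {i | σ i ≠ none} := by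
  intro i hi j hj hij
  obtain ⟨v, hv⟩ := Option.ne_none_iff_exists'.1 hi
  exact hτ ((h i v hv).trans (h j v (hij ▸ hv)).symm)

open scoped Classical in
noncomputable def committed [Fintype β] (σ : α → Option β) : Finset β :=
  {v | ∃ i, σ i = some v}

theorem mem_committed [Fintype β] {σ : α → Option β} {v : β} :
    v ∈ committed σ ↔ ∃ i, σ i = some v := by
  simp [committed]

theorem card_committed_le [Fintype α] [Fintype β] [DecidableEq β] (σ : α → Option β)
    [DecidablePred fun i => σ i ≠ none] : #(committed σ) ≤ #{i | σ i ≠ none} :=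
  calc #(committed σ) = #((committed σ).image some) :=
        (card_image_of_injective _ (Option.some_injective β)).symm
    _ ≤ #(({i | σ i ≠ none} : Finset α).image σ) := by
        refine card_le_card fun x hx => ?_
        obtain ⟨v, hv, rfl⟩ := mem_image.1 hx
        obtain ⟨i, hi⟩ := mem_committed.1 hv
        exact mem_image.2 ⟨i, by simp [hi], hi⟩
    _ ≤ _ := card_image_le

noncomputable def pick (s : Finset α) : Option α := s.toList.head?

theorem mem_of_pick_eq_some {s : Finset α} {v : α} (h : pick s = some v) : v ∈ s :=
  mem_toList.1 (List.mem_of_mem_head? h)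

theorem pick_ne_none {s : Finset α} (h : s.Nonempty) : pick s ≠ none := by
  simpa [pick, List.head?_eq_none_iff, toList_eq_nil] using h.ne_empty

end PartialMatching

section Rounds

variable {n : ℕ}

def setRound {β : Type*} (f : Fin n → β) (t : ℕ) (x : β) : Fin n → β :=
  fun i => if i.val = t then x else f i

noncomputable def commitUpTo (σ : Fin n → Option (Fin n)) (t : ℕ) : Fin n → Option (Fin n) :=
  fun i => if i.val ≤ t then some (completion σ i) else σ i

theorem commitUpTo_eq_of_eq_some {σ : Fin n → Option (Fin n)}
    (hσ : Set.InjOn σ {i | σ i ≠ none}) (t : ℕ) {i v : Fin n} (hi : σ i = some v) :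
    commitUpTo σ t i = some v := by
  unfold commitUpTo
  split_ifs
  · rw [completion_apply hσ hi]
  · exact hi

theorem injOn_commitUpTo {σ : Fin n → Option (Fin n)} (hσ : Set.InjOn σ {i | σ i ≠ none})
    (t : ℕ) : Set.InjOn (commitUpTo σ t) {i | commitUpTo σ t i ≠ none} := by
  refine injOn_of_eq_some (completion σ).injective fun i v hi => ?_
  unfold commitUpTo at hi
  split_ifs at hi
  · exact Option.some_inj.1 hi
  · exact completion_apply hσ hi

theorem injOn_setRound {σ : Fin n → Option (Fin n)} (hσ : Set.InjOn σ {i | σ i ≠ none})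
    {t : ℕ} {x : Option (Fin n)}
    (hx : ∀ v, x = some v → v ∉ committed σ) :
    Set.InjOn (setRound σ t x) {i | setRound σ t x i ≠ none} := by
  intro i hi j _ hij
  simp only [setRound] at hi hij
  obtain ⟨v, hv⟩ := Option.ne_none_iff_exists'.1 hi
  split_ifs at hv hij with hit hjt hjt
  · exact Fin.ext (hit.trans hjt.symm)
  · exact absurd (mem_committed.2 ⟨j, hij ▸ hv.symm ▸ rfl⟩) (hx v hv)
  · exact absurd (mem_committed.2 ⟨i, hv⟩) (hx v (hij ▸ hv))
  · exact hσ (by simp [hv]) (by simp [← hij, hv]) hij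

def predicted (σ : Fin n → Option (Fin n)) (t : ℕ) : Finset (Fin n) :=
  {v | ∃ i : Fin n, i.val ≤ t ∧ σ i = some v}

theorem accPred_eq_predicted (π : Fin n ≃ Fin n) (t : ℕ) :
    accPred π t = predicted (fun i => some (π i)) t := by
  ext v
  simp [accPred, predicted]

theorem predicted_congr {σ σ' : Fin n → Option (Fin n)} {t : ℕ}
    (h : ∀ i : Fin n, i.val ≤ t → σ i = σ' i) : predicted σ t = predicted σ' t := by
  ext v
  simp only [predicted, mem_filter, mem_univ, true_and]
  exact exists_congr fun i => and_congr_right fun hi => by rw [h i hi]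

theorem reqsUpTo_congr {r r' : Fin n → Option (Fin n)} {t : ℕ}
    (h : ∀ i : Fin n, i.val ≤ t → r i = r' i) : reqsUpTo r t = reqsUpTo r' t := by
  refine List.ext_getElem (by simp [reqsUpTo]) fun k hk _ => ?_
  simp only [reqsUpTo, List.length_take, List.length_ofFn] at hk
  simp only [reqsUpTo, List.getElem_take, List.getElem_ofFn]
  exact h _ (by simp; omega)

theorem predsUpTo_congr {q : List (Option (Fin n)) → Bool} {r r' : Fin n → Option (Fin n)}
    {P P' : ℕ → Finset (Fin n)} {t : ℕ} (hr : ∀ i : Fin n, i.val ≤ t → r i = r' i)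
    (hP : ∀ t' ≤ t, q (reqsUpTo r t') = true → P t' = P' t') :
    predsUpTo q r P t = predsUpTo q r' P' t := by
  have hreq : ∀ t' ≤ t, reqsUpTo r t' = reqsUpTo r' t' := fun t' ht' =>
    reqsUpTo_congr fun i hi => hr i (hi.trans ht')
  unfold predsUpTo
  rw [List.filter_congr fun t' ht' => by rw [hreq t' (by simp at ht'; omega)]]
  refine List.map_congr_left fun t' ht' => ?_
  simp only [List.mem_filter, List.mem_range] at ht'
  exact hP t' (by omega) (by rw [hreq t' (by omega)]; exact ht'.2)

theorem card_filter_val_lt_succ (p : Fin n → Prop) [DecidablePred p] {t : ℕ} (ht : t < n) :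
    #{i : Fin n | i.val < t + 1 ∧ p i} =
      #{i : Fin n | i.val < t ∧ p i} + if p ⟨t, ht⟩ then 1 else 0 := by
  have hsplit : filter (fun i : Fin n => i.val < t + 1 ∧ p i) univ =
      filter (fun i : Fin n => i.val < t ∧ p i) univ ∪
        filter (fun i => i = ⟨t, ht⟩ ∧ p i) univ := by
    ext i
    by_cases hp : p i <;> simp [hp, Fin.ext_iff]; omega
  rw [hsplit, card_union_of_disjoint (disjoint_filter.2 fun i _ h h' => by
    rw [h'.1] at h; exact lt_irrefl t h.1)]
  split_ifs with hp
  · have : filter (fun i => i = ⟨t, ht⟩ ∧ p i) univ = {⟨t, ht⟩} := by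
      ext i
      simp only [mem_filter, mem_univ, true_and, mem_singleton, and_iff_left_iff_imp]
      rintro rfl
      exact hp
    rw [this, card_singleton]
  · rw [filter_false_of_mem fun i _ (h : i = ⟨t, ht⟩ ∧ p i) => hp (h.1 ▸ h.2), card_empty]

end Rounds

section Adversary

variable {n : ℕ}

/-- `mat` is the part of the offline matching fixed so far, with `none` for open rounds; a query
in round `t` fixes all rounds up to `t` (`commitUpTo`). -/
structure AdvState (n : ℕ) where
  req : Fin n → Option (Fin n)
  mat : Fin n → Option (Fin n)

variable (B : ℕ) (q : List (Option (Fin n)) → Bool)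
  (act : List (Option (Fin n)) → List (Finset (Fin n)) → Fin n)

def alg (s : AdvState n) (t : ℕ) : Fin n :=
  act (reqsUpTo s.req t) (predsUpTo q s.req (predicted s.mat) t)

noncomputable def candidates (s : AdvState n) (t : ℕ) : Finset (Fin n) :=
  (range t).image (alg q act s) \ committed s.mat

def numCenters (r : Fin n → Option (Fin n)) (t : ℕ) : ℕ :=
  #{i : Fin n | i.val < t ∧ r i = none}

def numQueries (r : Fin n → Option (Fin n)) (t : ℕ) : ℕ :=
  #{i : Fin n | i.val < t ∧ q (reqsUpTo r i) = true}

/-- Requested servers are committed, so `candidates` are the servers the algorithm has used that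
are neither predicted nor requested. After `B + 1` center requests the adversary requests an
uncommitted leaf instead of the center; this keeps the offline cost at most `B + 1` for every
algorithm, and never happens within the query budget. -/
noncomputable def nextReq (s : AdvState n) (t : ℕ) : Option (Fin n) :=
  if (candidates q act s t).Nonempty then pick (candidates q act s t)
  else if numCenters s.req t ≤ B then none
  else pick (committed s.mat)ᶜ

noncomputable def step (s : AdvState n) (t : ℕ) : AdvState n :=
  let req := setRound s.req t (nextReq B q act s t)
  let mat := setRound s.mat t (nextReq B q act s t)
  ⟨req, if q (reqsUpTo req t) then commitUpTo mat t else mat⟩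

noncomputable def play : ℕ → AdvState n
  | 0 => ⟨fun _ => none, fun _ => none⟩
  | t + 1 => step B q act (play t) t

structure WellFormed (s : AdvState n) (t : ℕ) : Prop where
  mat_eq_none : ∀ i : Fin n, t ≤ i.val → s.mat i = none
  injOn_mat : Set.InjOn s.mat {i | s.mat i ≠ none}
  mat_eq_of_req : ∀ i v, s.req i = some v → s.mat i = some v

variable {B q act}

theorem nextReq_notMem_committed {s : AdvState n} {t : ℕ} {v : Fin n}
    (h : nextReq B q act s t = some v) : v ∉ committed s.mat := by
  unfold nextReq at h
  split_ifs at h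
  · exact (mem_sdiff.1 (mem_of_pick_eq_some h)).2
  · exact mem_compl.1 (mem_of_pick_eq_some h)

theorem nextReq_mem_candidates {s : AdvState n} {t : ℕ} {v : Fin n}
    (hc : ¬(candidates q act s t).Nonempty → numCenters s.req t ≤ B)
    (h : nextReq B q act s t = some v) : v ∈ candidates q act s t := by
  unfold nextReq at h
  split_ifs at h with h₁ h₂
  · exact mem_of_pick_eq_some h
  · exact absurd (hc h₁) h₂

theorem numCenters_le_of_nextReq_eq_none {s : AdvState n} {t : ℕ}
    (hfree : (committed s.mat)ᶜ.Nonempty) (h : nextReq B q act s t = none) :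
    numCenters s.req t ≤ B := by
  unfold nextReq at h
  split_ifs at h with h₁ h₂
  · exact absurd h (pick_ne_none h₁)
  · exact h₂
  · exact absurd h (pick_ne_none hfree)

theorem not_nonempty_candidates_of_nextReq_eq_none {s : AdvState n} {t : ℕ}
    (h : nextReq B q act s t = none) : ¬(candidates q act s t).Nonempty := by
  unfold nextReq at h
  split_ifs at h with h₁
  · exact absurd h (pick_ne_none h₁)
  all_goals exact h₁

theorem WellFormed.injOn_setRound_nextReq {s : AdvState n} {t : ℕ} (hs : WellFormed s t) :
    Set.InjOn (setRound s.mat t (nextReq B q act s t))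
      {i | setRound s.mat t (nextReq B q act s t) i ≠ none} :=
  injOn_setRound hs.injOn_mat fun _ => nextReq_notMem_committed

theorem WellFormed.step_mat_eq_of_setRound {s : AdvState n} {t : ℕ} (hs : WellFormed s t)
    {i v : Fin n} (hi : setRound s.mat t (nextReq B q act s t) i = some v) :
    (step B q act s t).mat i = some v := by
  simp only [step]
  split_ifs
  · exact commitUpTo_eq_of_eq_some hs.injOn_setRound_nextReq t hi
  · exact hi

theorem WellFormed.step_mat_eq {s : AdvState n} {t : ℕ} (hs : WellFormed s t) {i v : Fin n}
    (hi : s.mat i = some v) : (step B q act s t).mat i = some v := by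
  have hit : i.val ≠ t := fun h => by simp [hs.mat_eq_none i h.ge] at hi
  exact hs.step_mat_eq_of_setRound (by simp [setRound, hit, hi])

theorem wellFormed_step {s : AdvState n} {t : ℕ} (hs : WellFormed s t) :
    WellFormed (step B q act s t) (t + 1) where
  mat_eq_none i hi := by
    have : setRound s.mat t (nextReq B q act s t) i = none := by
      simp [setRound, show i.val ≠ t by omega, hs.mat_eq_none i (by omega)]
    simp only [step]
    split_ifs
    · simp [commitUpTo, show ¬i.val ≤ t by omega, this]
    · exact this
  injOn_mat := by
    simp only [step]
    split_ifs
    · exact injOn_commitUpTo hs.injOn_setRound_nextReq t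
    · exact hs.injOn_setRound_nextReq
  mat_eq_of_req i v hi := by
    refine hs.step_mat_eq_of_setRound ?_
    simp only [step, setRound] at hi ⊢
    split_ifs at hi ⊢
    · exact hi
    · exact hs.mat_eq_of_req i v hi

theorem wellFormed_play (t : ℕ) : WellFormed (play B q act t) t := by
  induction t with
  | zero => exact ⟨fun _ _ => rfl, fun _ h => absurd rfl h, fun _ _ h => nomatch h⟩
  | succ t ih => exact wellFormed_step ih

end Adversary

section Play

variable {n B : ℕ} {q : List (Option (Fin n)) → Bool}
  {act : List (Option (Fin n)) → List (Finset (Fin n)) → Fin n}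

theorem play_succ_req (t : ℕ) :
    (play B q act (t + 1)).req =
      setRound (play B q act t).req t (nextReq B q act (play B q act t) t) := rfl

theorem play_succ_mat (t : ℕ) :
    (play B q act (t + 1)).mat =
      if q (reqsUpTo (play B q act (t + 1)).req t) then
        commitUpTo (setRound (play B q act t).mat t (nextReq B q act (play B q act t) t)) t
      else setRound (play B q act t).mat t (nextReq B q act (play B q act t) t) := rfl

theorem play_req_of_lt {i : Fin n} {t t' : ℕ} (hi : i.val < t) (ht : t ≤ t') :
    (play B q act t').req i = (play B q act t).req i := by
  induction t', ht using Nat.le_induction with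
  | base => rfl
  | succ t' ht ih => rw [play_succ_req, setRound, if_neg (by omega), ih]

theorem play_mat_of_eq_some {i v : Fin n} {t t' : ℕ} (ht : t ≤ t')
    (hi : (play B q act t).mat i = some v) : (play B q act t').mat i = some v := by
  induction t', ht using Nat.le_induction with
  | base => exact hi
  | succ t' _ ih => exact (wellFormed_play t').step_mat_eq ih

theorem play_mat_ne_none_of_query {t' t : ℕ} (ht : t' < t)
    (hq : q (reqsUpTo (play B q act t).req t') = true) {i : Fin n} (hi : i.val ≤ t') :
    (play B q act t).mat i ≠ none := by
  have hq' : q (reqsUpTo (play B q act (t' + 1)).req t') = true := by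
    rwa [← reqsUpTo_congr (r := (play B q act t).req) fun j hj => play_req_of_lt (by omega) ht]
  have hcommit : (play B q act (t' + 1)).mat i ≠ none := by
    rw [play_succ_mat, if_pos hq']
    simp [commitUpTo, hi]
  obtain ⟨v, hv⟩ := Option.ne_none_iff_exists'.1 hcommit
  simp [play_mat_of_eq_some ht hv]

theorem alg_play_eq {t' t t₂ : ℕ} (ht' : t' < t) (ht : t ≤ t₂) :
    alg q act (play B q act t) t' = alg q act (play B q act t₂) t' := by
  have hreq : ∀ i : Fin n, i.val ≤ t' → (play B q act t).req i = (play B q act t₂).req i :=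
    fun i hi => (play_req_of_lt (by omega) ht).symm
  refine congrArg₂ act (reqsUpTo_congr hreq)
    (predsUpTo_congr hreq fun t'' ht'' hq => predicted_congr fun i hi => ?_)
  obtain ⟨v, hv⟩ :=
    Option.ne_none_iff_exists'.1 (play_mat_ne_none_of_query (by omega) hq hi)
  rw [hv, play_mat_of_eq_some ht hv]

theorem act_eq_alg_play (t : Fin n) :
    act (reqsUpTo (play B q act n).req t)
        (predsUpTo q (play B q act n).req (accPred (completion (play B q act n).mat)) t) =
      alg q act (play B q act n) t := by
  refine congrArg (act _) (predsUpTo_congr (fun _ _ => rfl) fun t' ht' hq => ?_)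
  rw [accPred_eq_predicted]
  refine predicted_congr fun i hi => ?_
  obtain ⟨v, hv⟩ :=
    Option.ne_none_iff_exists'.1 (play_mat_ne_none_of_query (by omega) hq hi)
  rw [hv, completion_apply (wellFormed_play n).injOn_mat hv]

end Play

section Counting

variable {n B : ℕ} {q : List (Option (Fin n)) → Bool}
  {act : List (Option (Fin n)) → List (Finset (Fin n)) → Fin n}

theorem numCenters_eq_card (r : Fin n → Option (Fin n)) :
    numCenters r n = #{i | r i = none} := by
  simp [numCenters]

theorem numQueries_eq_card (r : Fin n → Option (Fin n)) :
    numQueries q r n = #{i : Fin n | q (reqsUpTo r i) = true} := by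
  simp [numQueries]

theorem numQueries_congr {r r' : Fin n → Option (Fin n)} {t : ℕ}
    (h : ∀ i : Fin n, i.val < t → r i = r' i) : numQueries q r t = numQueries q r' t := by
  refine congrArg card (filter_congr fun i _ => and_congr_right fun hi => ?_)
  rw [reqsUpTo_congr fun j (hj : j.val ≤ i.val) => h j (by omega)]

theorem numQueries_mono (r : Fin n → Option (Fin n)) {t t' : ℕ} (ht : t ≤ t') :
    numQueries q r t ≤ numQueries q r t' :=
  card_le_card (monotone_filter_right _ fun i _ h => ⟨by omega, h.2⟩)

theorem numCenters_play_succ {t : ℕ} (ht : t < n) :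
    numCenters (play B q act (t + 1)).req (t + 1) =
      numCenters (play B q act t).req t +
        if nextReq B q act (play B q act t) t = none then 1 else 0 := by
  rw [numCenters, card_filter_val_lt_succ (fun i => (play B q act (t + 1)).req i = none) ht]
  congr 1
  · exact congrArg card (filter_congr fun i _ => and_congr_right fun hi => by
      rw [play_req_of_lt hi (Nat.le_succ t)])
  · simp [play_succ_req, setRound]

theorem numQueries_play_succ {t : ℕ} (ht : t < n) :
    numQueries q (play B q act (t + 1)).req (t + 1) =
      numQueries q (play B q act t).req t +
        if q (reqsUpTo (play B q act (t + 1)).req t) = true then 1 else 0 := by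
  rw [numQueries, card_filter_val_lt_succ _ ht, ← numQueries,
    numQueries_congr fun i hi => play_req_of_lt hi (Nat.le_succ t)]

theorem numQueries_play_le {t : ℕ} (ht : t ≤ n) :
    numQueries q (play B q act t).req t ≤ numQueries q (play B q act n).req n := by
  rw [numQueries_congr fun i hi => (play_req_of_lt hi ht).symm]
  exact numQueries_mono _ ht

theorem WellFormed.defined_subset {s : AdvState n} {t : ℕ} (hs : WellFormed s t) :
    filter (fun i => s.mat i ≠ none) univ ⊆ filter (fun i : Fin n => i.val < t) univ :=
  monotone_filter_right _ fun i _ hi => by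
    by_contra h
    exact hi (hs.mat_eq_none i (by omega))

theorem WellFormed.compl_committed_nonempty {s : AdvState n} {t : ℕ} (hs : WellFormed s t)
    (ht : t < n) : (committed s.mat)ᶜ.Nonempty := by
  rw [← card_pos, card_compl, Fintype.card_fin]
  have := card_le_card hs.defined_subset
  have := Fin.card_filter_val_lt (n := n) (m := t)
  have := card_committed_le s.mat
  omega

theorem WellFormed.card_committed_lt_of_pending {s : AdvState n} {t : ℕ} (hs : WellFormed s t)
    {i₀ : Fin n} (hi₀ : i₀.val < t) (hpend : s.mat i₀ = none) : #(committed s.mat) < t := by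
  have := card_lt_card ((ssubset_iff_of_subset hs.defined_subset).2
    ⟨i₀, by simp [hi₀], by simp [hpend]⟩)
  have := Fin.card_filter_val_lt (n := n) (m := t)
  have := card_committed_le s.mat
  omega

theorem WellFormed.candidates_nonempty {s : AdvState n} {t : ℕ} (hs : WellFormed s t)
    (hinj : Set.InjOn (alg q act s) (range t)) {i₀ : Fin n} (hi₀ : i₀.val < t)
    (hpend : s.mat i₀ = none) : (candidates q act s t).Nonempty := by
  refine sdiff_nonempty_of_card_lt_card ?_
  rw [card_image_of_injOn hinj, card_range]
  exact hs.card_committed_lt_of_pending hi₀ hpend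

theorem numCenters_play_le {t : ℕ} (ht : t ≤ n) :
    numCenters (play B q act t).req t ≤ B + 1 := by
  induction t with
  | zero => simp [numCenters]
  | succ t ih =>
    rw [numCenters_play_succ ht]
    split_ifs with hx
    · have := numCenters_le_of_nextReq_eq_none
        ((wellFormed_play t).compl_committed_nonempty ht) hx
      omega
    · exact (ih (by omega)).trans (by omega)

end Counting

section LowerBound

variable {n B : ℕ} {q : List (Option (Fin n)) → Bool}
  {act : List (Option (Fin n)) → List (Finset (Fin n)) → Fin n}

theorem injOn_alg_play (hinj : Function.Injective fun t : Fin n => alg q act (play B q act n) t)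
    {t : ℕ} (ht : t ≤ n) : Set.InjOn (alg q act (play B q act t)) (range t) := by
  intro a ha b hb hab
  rw [coe_range, Set.mem_Iio] at ha hb
  rw [alg_play_eq ha ht, alg_play_eq hb ht] at hab
  exact congrArg Fin.val (hinj (a₁ := ⟨a, by omega⟩) (a₂ := ⟨b, by omega⟩) hab)

theorem numCenters_play_le_numQueries
    (hinj : Function.Injective fun t : Fin n => alg q act (play B q act n) t)
    {t : ℕ} (ht : t ≤ n) :
    ((∀ i : Fin n, i.val < t → (play B q act t).mat i ≠ none) →
        numCenters (play B q act t).req t ≤ numQueries q (play B q act t).req t) ∧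
      numCenters (play B q act t).req t ≤ numQueries q (play B q act t).req t + 1 := by
  induction t with
  | zero => simp [numCenters]
  | succ t ih =>
    obtain ⟨ih₁, ih₂⟩ := ih (by omega)
    have hnone : nextReq B q act (play B q act t) t = none →
        numCenters (play B q act t).req t ≤ numQueries q (play B q act t).req t :=
      fun hx => ih₁ fun i hi hpend => not_nonempty_candidates_of_nextReq_eq_none hx
        ((wellFormed_play t).candidates_nonempty (injOn_alg_play hinj (by omega)) hi hpend)
    rw [numCenters_play_succ ht, numQueries_play_succ ht]
    by_cases hq : q (reqsUpTo (play B q act (t + 1)).req t) = true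
    · rw [if_pos hq]
      split_ifs with hx
      · have := hnone hx
        omega
      · omega
    · have hmat : ∀ i : Fin n, (play B q act (t + 1)).mat i =
          setRound (play B q act t).mat t (nextReq B q act (play B q act t) t) i := by
        simp [play_succ_mat, hq]
      rw [if_neg hq, add_zero]
      split_ifs with hx
      · refine ⟨fun hdef => absurd ?_ (hdef ⟨t, ht⟩ (by simp)), by have := hnone hx; omega⟩
        simp [hmat, setRound, hx]
      · refine ⟨fun hdef => ?_, by simpa using ih₂⟩
        simpa using ih₁ fun i hi => by simpa [hmat, setRound, hi.ne] using hdef i (by omega)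

theorem exists_alg_eq_of_req_eq_some (hQ : numQueries q (play B q act n).req n ≤ B)
    (hinj : Function.Injective fun t : Fin n => alg q act (play B q act n) t)
    {t : Fin n} {v : Fin n} (hv : (play B q act n).req t = some v) :
    ∃ t' < t.val, alg q act (play B q act n) t' = v := by
  have hx : nextReq B q act (play B q act t) t = some v := by
    rw [← hv, play_req_of_lt (lt_add_one t.val) t.isLt]
    simp [play_succ_req, setRound]
  have hcand : ¬(candidates q act (play B q act t) t).Nonempty →
      numCenters (play B q act t).req t ≤ B := fun hc =>
    calc numCenters (play B q act t).req t ≤ numQueries q (play B q act t).req t :=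
          (numCenters_play_le_numQueries hinj t.isLt.le).1 fun i hi hpend =>
            hc ((wellFormed_play t).candidates_nonempty (injOn_alg_play hinj t.isLt.le) hi hpend)
      _ ≤ numQueries q (play B q act n).req n := numQueries_play_le t.isLt.le
      _ ≤ B := hQ
  obtain ⟨t', ht', he⟩ := mem_image.1 (mem_sdiff.1 (nextReq_mem_candidates hcand hx)).1
  exact ⟨t', mem_range.1 ht', (alg_play_eq (mem_range.1 ht') t.isLt.le).symm.trans he⟩

end LowerBound

section Cost

variable {n : ℕ}

theorem starDist_none_some (v : Fin n) : starDist none (some v) = 1 := by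
  simp [starDist]

theorem starDist_some_self (v : Fin n) : starDist (some v) (some v) = 0 := by
  simp [starDist]

theorem starDist_some_some_of_ne {u v : Fin n} (h : u ≠ v) : starDist (some u) (some v) = 2 := by
  simp [starDist, h]

theorem starDist_nonneg (x y : Option (Fin n)) : 0 ≤ starDist x y := by
  unfold starDist
  split_ifs <;> norm_num

theorem sum_starDist_eq_card_of_matched {r : Fin n → Option (Fin n)} {f : Fin n → Fin n}
    (h : ∀ t v, r t = some v → f t = v) :
    ∑ t, starDist (r t) (some (f t)) = #{t | r t = none} := by
  rw [natCast_card_filter]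
  refine sum_congr rfl fun t _ => ?_
  rcases hr : r t with _ | v
  · simp [starDist_none_some]
  · simp [h t v hr, starDist_some_self]

theorem card_le_sum_starDist (r : Fin n → Option (Fin n)) (f : Fin n → Fin n) :
    (#{t | r t = none} : ℝ) ≤ ∑ t, starDist (r t) (some (f t)) := by
  rw [natCast_card_filter]
  refine sum_le_sum fun t _ => ?_
  rcases r t with _ | v
  · simp [starDist_none_some]
  · simpa using starDist_nonneg _ _

theorem two_mul_sub_card_le_sum_starDist {r : Fin n → Option (Fin n)} {f : Fin n → Fin n}
    (h : ∀ t v, r t = some v → f t ≠ v) :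
    2 * (n : ℝ) - #{t | r t = none} ≤ ∑ t, starDist (r t) (some (f t)) := by
  have hpoint : ∀ t, 2 - (if r t = none then (1 : ℝ) else 0) ≤
      starDist (r t) (some (f t)) := by
    intro t
    rcases hr : r t with _ | v
    · simp [starDist_none_some]; norm_num
    · simp [starDist_some_some_of_ne (h t v hr).symm]
  calc 2 * (n : ℝ) - #{t | r t = none}
        = ∑ t : Fin n, (2 - if r t = none then (1 : ℝ) else 0) := by
        rw [sum_sub_distrib, ← natCast_card_filter, sum_const, card_univ, Fintype.card_fin,
          nsmul_eq_mul, mul_comm]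
    _ ≤ _ := sum_le_sum fun t _ => hpoint t

end Cost

end OnlineStarMatching

open OnlineStarMatching

theorem stmt8_general (n B : ℕ)
    (q : List (Option (Fin n)) → Bool)
    (act : List (Option (Fin n)) → List (Finset (Fin n)) → Fin n) :
    ∃ (r : Fin n → Option (Fin n)) (π : Fin n ≃ Fin n),
      (∑ t : Fin n, starDist (r t) (some (π t)) ≤ (B : ℝ) + 1) ∧
      (∀ π' : Fin n ≃ Fin n,
        ∑ t : Fin n, starDist (r t) (some (π t)) ≤
          ∑ t : Fin n, starDist (r t) (some (π' t))) ∧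
      (((Finset.univ.filter fun t : Fin n => q (reqsUpTo r t.val) = true).card ≤ B) →
        (Function.Injective fun t : Fin n =>
          act (reqsUpTo r t.val) (predsUpTo q r (accPred π) t.val)) →
        (2 * (n : ℝ) - B - 1) ≤
          ∑ t : Fin n, starDist (r t)
            (some (act (reqsUpTo r t.val) (predsUpTo q r (accPred π) t.val)))) := by
  have hact := act_eq_alg_play (B := B) (q := q) (act := act)
  set s := play B q act n
  have hmatched : ∀ t v, s.req t = some v → completion s.mat t = v := fun t v hv =>
    completion_apply (wellFormed_play n).injOn_mat ((wellFormed_play n).mat_eq_of_req t v hv)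
  have hcenters : (#{t | s.req t = none} : ℝ) ≤ B + 1 := by
    rw [← numCenters_eq_card]
    exact_mod_cast numCenters_play_le le_rfl
  refine ⟨s.req, completion s.mat, ?_, fun π' => ?_, fun hQ hinj => ?_⟩
  · rwa [sum_starDist_eq_card_of_matched hmatched]
  · rw [sum_starDist_eq_card_of_matched hmatched]
    exact card_le_sum_starDist _ _
  · simp only [hact] at hinj ⊢
    have hleaf : ∀ t v, s.req t = some v → alg q act s t ≠ v := fun t v hv he => by
      obtain ⟨t', ht', hv'⟩ :=
        exists_alg_eq_of_req_eq_some ((numQueries_eq_card _).trans_le hQ) hinj hv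
      exact ht'.ne (congrArg Fin.val (hinj (a₁ := ⟨t', by omega⟩) (hv'.trans he.symm)))
    linarith [two_mul_sub_card_le_sum_starDist hleaf]

/-- For every deterministic online matching algorithm on the star metric that may
query a prediction oracle at most `B` times (query rule `q`, action rule `act`),
there is a request sequence `r` and an optimal offline matching `π` of cost at
most `B + 1` such that, with the accurate predictions derived from `π`, the
algorithm (if it makes at most `B` queries and never reuses a server) incurs
cost at least `2n − B − 1`. -/
theorem stmt8 (n B : ℕ) (hB : B + 1 ≤ n)
    (q : List (Option (Fin n)) → Bool)
    (act : List (Option (Fin n)) → List (Finset (Fin n)) → Fin n) :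
    ∃ (r : Fin n → Option (Fin n)) (π : Fin n ≃ Fin n),
      (∑ t : Fin n, starDist (r t) (some (π t)) ≤ (B : ℝ) + 1) ∧
      (∀ π' : Fin n ≃ Fin n,
        ∑ t : Fin n, starDist (r t) (some (π t)) ≤
          ∑ t : Fin n, starDist (r t) (some (π' t))) ∧
      (((Finset.univ.filter fun t : Fin n => q (reqsUpTo r t.val) = true).card ≤ B) →
        (Function.Injective fun t : Fin n =>
          act (reqsUpTo r t.val) (predsUpTo q r (accPred π) t.val)) →
        (2 * (n : ℝ) - B - 1) ≤
          ∑ t : Fin n, starDist (r t)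
            (some (act (reqsUpTo r t.val) (predsUpTo q r (accPred π) t.val)))) :=
  stmt8_general n B q act
end

section
/- Suppose a sequence of phase costs satisfies: for each odd i < ℓ the algorithm-A cost at the end of phase i is at most 2^i, for each even i < ℓ the algorithm-B cost at the end of phase i is at most 2^i, the total combined cost is at most cost(A) + 2^{ℓ+1} (where cost(A) ≤ 2^ℓ at the start of the last odd phase ℓ is not assumed, but cost(A) > 2^{ℓ−2} because phase ℓ−2 terminated). Then if cost(A) ≤ cost(B), the total cost is at most 9·min(cost(A), cost(B)); if cost(A) > cost(B) and cost(A) ≤ 2^ℓ, the total cost is at most 6·min(cost(A), cost(B)). -/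
/-- Arithmetic core of the doubling combination of two algorithms `A`, `B`:
phases alternate, phase `i` ends when the followed algorithm's cost exceeds
`2^i`, the total cost is at most `cost(A) + 2^{ℓ+1}` with `ℓ ≥ 3` odd, and
`cost(A) > 2^{ℓ−2}` since phase `ℓ−2` terminated.  If `cost(A) ≤ cost(B)` the
total is at most `9·min(cost(A), cost(B))`; if `cost(B) < cost(A)`,
`cost(A) ≤ 2^ℓ`, and `cost(B) > 2^{ℓ−1}` (phase `ℓ−1` terminated), the total is
at most `6·min(cost(A), cost(B))`. -/
theorem stmt10 (ℓ : ℕ) (hℓ3 : 3 ≤ ℓ) (hodd : Odd ℓ)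
    (cA cB total : ℝ) (hA1 : 1 ≤ cA) (hB1 : 1 ≤ cB)
    (htot : total ≤ cA + 2 ^ (ℓ + 1)) (hA2 : (2 : ℝ) ^ (ℓ - 2) < cA) :
    (cA ≤ cB → total ≤ 9 * min cA cB) ∧
    (cB < cA → cA ≤ 2 ^ ℓ → (2 : ℝ) ^ (ℓ - 1) < cB → total ≤ 6 * min cA cB) := by
  have h1 : ℓ - 2 + 3 = ℓ + 1 := by omega
  have h2 : ℓ - 1 + 1 = ℓ := by omega
  constructor
  · intro hAB
    have hmin : min cA cB = cA := min_eq_left hAB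
    have e : (2 : ℝ) ^ (ℓ + 1) = 8 * 2 ^ (ℓ - 2) := by
      rw [← h1, pow_add]; ring
    rw [hmin]; rw [e] at htot; nlinarith
  · intro hBA hA2l hB2
    have hmin : min cA cB = cB := min_eq_right hBA.le
    have e : (2 : ℝ) ^ ℓ = 2 * 2 ^ (ℓ - 1) := by
      have := pow_succ (2 : ℝ) (ℓ - 1)
      rw [h2] at this; rw [this]; ring
    rw [hmin]
    have e2 : (2 : ℝ) ^ (ℓ + 1) = 4 * 2 ^ (ℓ - 1) := by
      have h3 : ℓ + 1 = ℓ - 1 + 2 := by omega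
      have := pow_add (2 : ℝ) (ℓ - 1) 2
      rw [← h3] at this; rw [this]; ring
    nlinarith
end
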